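/- arXiv:1808.05273 — 2 statements merged into one kernel-verified Lean document; each statement's English description precedes it below -/
import Mathlib

section
/- Let F(u,v,ω) = Σ_{i=0}^n ω^{n−i} f_i(u,v) be the homogenization of f = Σ f_i ∈ ℝ[x,y] of degree n. Define A = F_uv F_u² − F_uu F_u F_v + ω^{2(n−1)} F_uv and B = F_vv F_u² − F_uu F_v² + ω^{2(n−1)}(F_vv − F_uu). Then the restriction to ω = 0 satisfies (uA + (v/2)B)|_{ω=0} = −(n/(2(n−1)))·v·f_n(u,v)·|Hess f_n(u,v)| for n ≥ 2. -/
open MvPolynomial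

/-- The Hessian determinant `p_uu·p_vv − p_uv²` of a bivariate polynomial. -/
noncomputable def hess (p : MvPolynomial (Fin 2) ℝ) : MvPolynomial (Fin 2) ℝ :=
  pderiv 0 (pderiv 0 p) * pderiv 1 (pderiv 1 p) - (pderiv 0 (pderiv 1 p)) ^ 2

/-- Evaluation of a bivariate polynomial at a point of ℝ². -/
noncomputable def ev (p : MvPolynomial (Fin 2) ℝ) (u v : ℝ) : ℝ :=
  eval ![u, v] p

/-- A bivariate polynomial viewed as a polynomial in the three variables `u, v, ω`. -/
noncomputable def lift2 (p : MvPolynomial (Fin 2) ℝ) : MvPolynomial (Fin 3) ℝ :=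
  rename Fin.castSucc p

/-- The homogenization `F(u,v,ω) = Σ_{i=0}^n ω^{n−i} f_i(u,v)` of `f`. -/
noncomputable def homog (n : ℕ) (f : MvPolynomial (Fin 2) ℝ) : MvPolynomial (Fin 3) ℝ :=
  ∑ i ∈ Finset.range (n + 1), X 2 ^ (n - i) * lift2 (homogeneousComponent i f)

/- ### Auxiliary lemmas -/

lemma degree_fin2 (d : Fin 2 →₀ ℕ) : d.degree = d 0 + d 1 := by
  rw [Finsupp.degree, ← Fin.sum_univ_two (fun i => d i)]
  apply Finset.sum_subset (Finset.subset_univ _)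
  intro i _ hi
  exact Finsupp.notMem_support_iff.mp hi

lemma pderiv_pderiv_comm (i j : Fin 2) (p : MvPolynomial (Fin 2) ℝ) :
    pderiv i (pderiv j p) = pderiv j (pderiv i p) := by
  induction p using MvPolynomial.induction_on' with
  | monomial d c =>
    simp only [pderiv_monomial]
    rcases eq_or_ne i j with rfl | hij
    · rfl
    · have h1 : (d - Finsupp.single j 1 : Fin 2 →₀ ℕ) i = d i := by
        rw [Finsupp.tsub_apply, Finsupp.single_eq_of_ne' (Ne.symm hij)]; rfl
      have h2 : (d - Finsupp.single i 1 : Fin 2 →₀ ℕ) j = d j := by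
        rw [Finsupp.tsub_apply, Finsupp.single_eq_of_ne' hij]; rfl
      rw [h1, h2, tsub_right_comm]
      congr 1
      ring
  | add p q hp hq => simp [hp, hq]

lemma isHomog_pderiv (n : ℕ) (p : MvPolynomial (Fin 2) ℝ) (hp : p.IsHomogeneous n)
    (j : Fin 2) : (pderiv j p).IsHomogeneous (n - 1) := by
  rw [p.as_sum, map_sum]
  apply IsHomogeneous.sum
  intro d hd
  rw [pderiv_monomial]
  rcases eq_or_ne (d j) 0 with h | h
  · rw [h]
    simp only [Nat.cast_zero, mul_zero, map_zero]
    exact isHomogeneous_zero _ _ _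
  · apply isHomogeneous_monomial
    have hdeg : d.degree = n := by
      have := hp (mem_support_iff.mp hd)
      rw [Finsupp.degree_eq_weight_one]; exact this
    rw [degree_fin2] at hdeg ⊢
    have h0 : (d - Finsupp.single j 1 : Fin 2 →₀ ℕ) 0 = d 0 - Finsupp.single j 1 0 :=
      Finsupp.tsub_apply _ _ _
    have h1 : (d - Finsupp.single j 1 : Fin 2 →₀ ℕ) 1 = d 1 - Finsupp.single j 1 1 :=
      Finsupp.tsub_apply _ _ _
    rw [h0, h1]
    fin_cases j <;> simp_all <;> omega

lemma euler (n : ℕ) (p : MvPolynomial (Fin 2) ℝ) (hp : p.IsHomogeneous n) :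
    ∑ i : Fin 2, X i * pderiv i p = (C (n : ℝ)) * p := by
  conv_lhs => rw [p.as_sum]
  conv_rhs => rw [p.as_sum]
  simp only [map_sum, Finset.mul_sum]
  rw [Finset.sum_comm]
  refine Finset.sum_congr rfl fun d hd => ?_
  have hdeg : ∑ i : Fin 2, (d i : ℝ) = (n : ℝ) := by
    have := hp (mem_support_iff.mp hd)
    rw [← this, Finsupp.weight_apply]
    push_cast
    rw [Finsupp.sum_fintype] <;> simp
  calc ∑ i : Fin 2, X i * pderiv i (monomial d (coeff d p))
      = ∑ i : Fin 2, monomial d (coeff d p * d i) := by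
        refine Finset.sum_congr rfl fun i _ => ?_
        rw [pderiv_monomial]
        rcases Nat.eq_zero_or_pos (d i) with h | h
        · simp [h]
        · rw [X, monomial_mul, one_mul, add_comm, tsub_add_cancel_of_le]
          exact Finsupp.single_le_iff.mpr h
    _ = monomial d ((n : ℝ) * coeff d p) := by
        rw [← map_sum, ← Finset.mul_sum, hdeg, mul_comm]
    _ = C (n : ℝ) * monomial d (coeff d p) := by rw [C_mul_monomial]

/-- Evaluated Euler identity. -/
lemma euler_ev (n : ℕ) (p : MvPolynomial (Fin 2) ℝ) (hp : p.IsHomogeneous n) (u v : ℝ) :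
    u * ev (pderiv 0 p) u v + v * ev (pderiv 1 p) u v = (n : ℝ) * ev p u v := by
  have h := congrArg (eval ![u, v]) (euler n p hp)
  simpa [Fin.sum_univ_two, ev] using h

lemma ev_lift2 (p : MvPolynomial (Fin 2) ℝ) (u v : ℝ) :
    eval ![u, v, 0] (lift2 p) = ev p u v := by
  rw [lift2, eval_rename, ev]
  have h : (![u, v, 0] ∘ Fin.castSucc : Fin 2 → ℝ) = ![u, v] := by
    funext i; fin_cases i <;> rfl
  rw [h]

lemma pderiv_homog_sum (n : ℕ) (g : ℕ → MvPolynomial (Fin 2) ℝ) (j : Fin 2) :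
    pderiv (Fin.castSucc j) (∑ i ∈ Finset.range (n + 1), X 2 ^ (n - i) * lift2 (g i)) =
      ∑ i ∈ Finset.range (n + 1), X 2 ^ (n - i) * lift2 (pderiv j (g i)) := by
  rw [map_sum]
  refine Finset.sum_congr rfl fun i _ => ?_
  rw [pderiv_mul]
  have h2 : pderiv (Fin.castSucc j) ((X 2 : MvPolynomial (Fin 3) ℝ) ^ (n - i)) = 0 := by
    rw [pderiv_pow, pderiv_X_of_ne, mul_zero]
    fin_cases j <;> decide
  rw [h2, zero_mul, zero_add, lift2, lift2,
    pderiv_rename (Fin.castSucc_injective 2)]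

lemma eval_homog_sum (n : ℕ) (g : ℕ → MvPolynomial (Fin 2) ℝ) (u v : ℝ) :
    eval ![u, v, 0] (∑ i ∈ Finset.range (n + 1), X 2 ^ (n - i) * lift2 (g i)) =
      ev (g n) u v := by
  rw [map_sum, Finset.sum_eq_single n]
  · simp [ev_lift2]
  · intro i hi hne
    have hpos : 0 < n - i :=
      Nat.sub_pos_of_lt (lt_of_le_of_ne (Nat.lt_succ_iff.mp (Finset.mem_range.mp hi)) hne)
    have hX : eval ![u, v, (0 : ℝ)] (X 2 : MvPolynomial (Fin 3) ℝ) = 0 := by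
      rw [eval_X]; rfl
    rw [eval_mul, eval_pow, hX, zero_pow hpos.ne', zero_mul]
  · intro h; exact absurd (Finset.self_mem_range_succ n) h

/-- Let `F` be the homogenization of `f ∈ ℝ[x,y]` of degree `n ≥ 2`, and let
`A = F_uv F_u² − F_uu F_u F_v + ω^{2(n−1)} F_uv`,
`B = F_vv F_u² − F_uu F_v² + ω^{2(n−1)}(F_vv − F_uu)`.
Then `(uA + (v/2)B)|_{ω=0} = −(n/(2(n−1)))·v·f_n(u,v)·|Hess f_n|(u,v)`. -/
theorem coefficient_uA_plus_vB_at_infinity (n : ℕ) (hn : 2 ≤ n)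
    (f : MvPolynomial (Fin 2) ℝ) (hf : f.totalDegree = n)
    (F Fu Fv Fuu Fuv Fvv A B : MvPolynomial (Fin 3) ℝ)
    (hF : F = homog n f)
    (hFu : Fu = pderiv 0 F) (hFv : Fv = pderiv 1 F)
    (hFuu : Fuu = pderiv 0 Fu) (hFuv : Fuv = pderiv 1 Fu) (hFvv : Fvv = pderiv 1 Fv)
    (hA : A = Fuv * Fu ^ 2 - Fuu * Fu * Fv + X 2 ^ (2 * (n - 1)) * Fuv)
    (hB : B = Fvv * Fu ^ 2 - Fuu * Fv ^ 2 + X 2 ^ (2 * (n - 1)) * (Fvv - Fuu)) :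
    ∀ u v : ℝ,
      u * eval ![u, v, 0] A + (v / 2) * eval ![u, v, 0] B =
        -((n : ℝ) / (2 * ((n : ℝ) - 1))) * v * ev (homogeneousComponent n f) u v *
          ev (hess (homogeneousComponent n f)) u v := by
  intro u v
  subst hA hB hFuu hFuv hFvv hFu hFv hF
  have hgh : (homogeneousComponent n f).IsHomogeneous n :=
    homogeneousComponent_isHomogeneous n f
  have h0 : (0 : Fin 3) = Fin.castSucc (0 : Fin 2) := rfl
  have h1 : (1 : Fin 3) = Fin.castSucc (1 : Fin 2) := rfl
  have hX : eval ![u, v, (0 : ℝ)] (X 2 : MvPolynomial (Fin 3) ℝ) = 0 := by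
    rw [eval_X]; rfl
  -- evaluations of the derivatives of F at ω = 0
  have Hu : eval ![u, v, 0] (pderiv 0 (homog n f)) =
      ev (pderiv 0 (homogeneousComponent n f)) u v := by
    rw [homog, h0, pderiv_homog_sum, eval_homog_sum]
  have Hv : eval ![u, v, 0] (pderiv 1 (homog n f)) =
      ev (pderiv 1 (homogeneousComponent n f)) u v := by
    rw [homog, h1, pderiv_homog_sum, eval_homog_sum]
  have Huu : eval ![u, v, 0] (pderiv 0 (pderiv 0 (homog n f))) =
      ev (pderiv 0 (pderiv 0 (homogeneousComponent n f))) u v := by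
    rw [homog, h0, pderiv_homog_sum, pderiv_homog_sum, eval_homog_sum]
  have Huv : eval ![u, v, 0] (pderiv 1 (pderiv 0 (homog n f))) =
      ev (pderiv 1 (pderiv 0 (homogeneousComponent n f))) u v := by
    rw [homog, h0, h1, pderiv_homog_sum, pderiv_homog_sum, eval_homog_sum]
  have Hvv : eval ![u, v, 0] (pderiv 1 (pderiv 1 (homog n f))) =
      ev (pderiv 1 (pderiv 1 (homogeneousComponent n f))) u v := by
    rw [homog, h1, pderiv_homog_sum, pderiv_homog_sum, eval_homog_sum]
  have hkne : 2 * (n - 1) ≠ 0 := by omega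
  have hhess : ev (hess (homogeneousComponent n f)) u v =
      ev (pderiv 0 (pderiv 0 (homogeneousComponent n f))) u v *
        ev (pderiv 1 (pderiv 1 (homogeneousComponent n f))) u v -
      ev (pderiv 1 (pderiv 0 (homogeneousComponent n f))) u v ^ 2 := by
    rw [hess, ev, ev, ev, ev]
    simp only [eval_sub, eval_mul, eval_pow]
    rw [pderiv_pderiv_comm 0 1]
  simp only [eval_add, eval_sub, eval_mul, eval_pow, hX, zero_pow hkne, zero_mul,
    add_zero, Hu, Hv, Huu, Huv, Hvv]
  rw [hhess]
  set P := ev (pderiv 0 (homogeneousComponent n f)) u v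
  set Q := ev (pderiv 1 (homogeneousComponent n f)) u v
  set R := ev (pderiv 0 (pderiv 0 (homogeneousComponent n f))) u v
  set S := ev (pderiv 1 (pderiv 0 (homogeneousComponent n f))) u v
  set T := ev (pderiv 1 (pderiv 1 (homogeneousComponent n f))) u v
  set G := ev (homogeneousComponent n f) u v
  -- Euler identities
  have e1 : u * P + v * Q = (n : ℝ) * G := euler_ev n _ hgh u v
  have e2 : u * R + v * S = ((n - 1 : ℕ) : ℝ) * P :=
    euler_ev (n - 1) _ (isHomog_pderiv n _ hgh 0) u v
  have e3 : u * S + v * T = ((n - 1 : ℕ) : ℝ) * Q := by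
    have h := euler_ev (n - 1) _ (isHomog_pderiv n _ hgh 1) u v
    rwa [show ev (pderiv 0 (pderiv 1 (homogeneousComponent n f))) u v = S by
      rw [pderiv_pderiv_comm]] at h
  have hcast : ((n - 1 : ℕ) : ℝ) = (n : ℝ) - 1 := by
    have h : 1 ≤ n := by omega
    push_cast [h]; ring
  rw [hcast] at e2 e3
  have h2n : (2 : ℝ) ≤ (n : ℝ) := by exact_mod_cast hn
  have hn1 : (n : ℝ) - 1 ≠ 0 := by nlinarith
  have hnne : (n : ℝ) ≠ 0 := by nlinarith
  have hP : P = (u * R + v * S) / ((n : ℝ) - 1) := by field_simp [e2]; linarith [e2]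
  have hQ : Q = (u * S + v * T) / ((n : ℝ) - 1) := by field_simp [e3]; linarith [e3]
  have hG : G = (u * P + v * Q) / (n : ℝ) := by
    field_simp
    linarith [e1]
  rw [hG, hP, hQ]
  field_simp
  ring
end

section
/- Let F(u,v,ω) = Σ_{i=0}^n ω^{n−i} f_i(u,v) be the homogenization of f ∈ ℝ[x,y] of degree n ≥ 2, and let A, B, C be as in the projective extension of the form of principal curvatures (A = F_uv F_u² − F_uu F_u F_v + ω^{2(n−1)}F_uv, B = F_vv F_u² − F_uu F_v² + ω^{2(n−1)}(F_vv − F_uu), C = F_vv F_u F_v − F_uv F_v² − ω^{2(n−1)}F_uv). Then ω divides the polynomial u²A + uvB + v²C, and (u²A + uvB + v²C)/ω restricted to ω = 0 equals n·f_n·((f_{n−1})_u (f_n)_v − (f_{n−1})_v (f_n)_u). -/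
open MvPolynomial

namespace OmegaAux

lemma deg2 (d : Fin 2 →₀ ℕ) : d.degree = d 0 + d 1 := by
  rw [Finsupp.degree_apply, Finset.sum_subset (Finset.subset_univ _)
    (fun i _ hi => Finsupp.notMem_support_iff.mp hi), Fin.sum_univ_two]

lemma pderiv_swap {σ : Type*} [DecidableEq σ] (i j : σ) (p : MvPolynomial σ ℝ) :
    pderiv i (pderiv j p) = pderiv j (pderiv i p) := by
  rcases eq_or_ne i j with rfl | h
  · rfl
  conv_lhs => rw [p.as_sum]
  conv_rhs => rw [p.as_sum]
  simp only [map_sum, pderiv_monomial]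
  refine Finset.sum_congr rfl fun d _ => ?_
  rw [Finsupp.tsub_apply, Finsupp.tsub_apply, Finsupp.single_eq_of_ne h,
    Finsupp.single_eq_of_ne (Ne.symm h), tsub_zero, tsub_zero, tsub_tsub, tsub_tsub,
    add_comm (Finsupp.single j 1), mul_right_comm]

lemma euler2 {m : ℕ} {p : MvPolynomial (Fin 2) ℝ} (hp : p.IsHomogeneous m) :
    X 0 * pderiv 0 p + X 1 * pderiv 1 p = C (m : ℝ) * p := by
  have key : ∀ d ∈ p.support,
      X 0 * pderiv 0 (monomial d (coeff d p)) + X 1 * pderiv 1 (monomial d (coeff d p)) =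
        C (m : ℝ) * monomial d (coeff d p) := by
    intro d hd
    have hdm : d 0 + d 1 = m := by
      have := hp (Finsupp.mem_support_iff.mp hd)
      change (Finsupp.weight fun _ => (1:ℕ)) d = m at this
      rw [← Finsupp.degree_eq_weight_one, deg2] at this
      exact this
    have hX : ∀ i : Fin 2, X i * pderiv i (monomial d (coeff d p)) =
        monomial d (coeff d p * (d i : ℝ)) := by
      intro i
      rw [pderiv_monomial, X, monomial_mul, one_mul]
      rcases Nat.eq_zero_or_pos (d i) with h0 | h0
      · rw [h0]; push_cast; rw [mul_zero, monomial_zero, monomial_zero]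
      · congr 1
        rw [add_tsub_cancel_of_le]
        exact Finsupp.single_le_iff.mpr h0
    rw [hX 0, hX 1, C_mul_monomial, ← map_add]
    congr 1
    rw [← hdm]; push_cast; ring
  conv_lhs => rw [p.as_sum]
  conv_rhs => rw [p.as_sum]
  rw [map_sum, map_sum, Finset.mul_sum, Finset.mul_sum, Finset.mul_sum,
    ← Finset.sum_add_distrib]
  exact Finset.sum_congr rfl key

lemma hom_pderiv {m : ℕ} {p : MvPolynomial (Fin 2) ℝ} (hp : p.IsHomogeneous m) (i : Fin 2) :
    (pderiv i p).IsHomogeneous (m - 1) := by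
  conv => enter [1]; rw [p.as_sum]
  rw [map_sum]
  refine IsHomogeneous.sum _ _ _ fun d hd => ?_
  rw [pderiv_monomial]
  rcases Nat.eq_zero_or_pos (d i) with h0 | h0
  · rw [h0]; push_cast; rw [mul_zero, monomial_zero]; exact isHomogeneous_zero _ _ _
  · apply isHomogeneous_monomial
    have hdm : d 0 + d 1 = m := by
      have := hp (Finsupp.mem_support_iff.mp hd)
      change (Finsupp.weight fun _ => (1:ℕ)) d = m at this
      rw [← Finsupp.degree_eq_weight_one, deg2] at this
      exact this
    rw [deg2, Finsupp.tsub_apply, Finsupp.tsub_apply]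
    have hi : i = 0 ∨ i = 1 := by fin_cases i <;> simp
    rcases hi with rfl | rfl <;>
      simp only [Finsupp.single_eq_same, Finsupp.single_eq_of_ne (by decide : (1:Fin 2) ≠ 0),
        Finsupp.single_eq_of_ne (by decide : (0:Fin 2) ≠ 1), tsub_zero] <;> omega



noncomputable def S (n : ℕ) (g : ℕ → MvPolynomial (Fin 2) ℝ) : MvPolynomial (Fin 3) ℝ :=
  ∑ i ∈ Finset.range (n + 1), X 2 ^ (n - i) * lift2 (g i)

lemma cast0 : (Fin.castSucc (0 : Fin 2)) = (0 : Fin 3) := rfl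
lemma cast1 : (Fin.castSucc (1 : Fin 2)) = (1 : Fin 3) := rfl

lemma pderiv0_lift2 (p : MvPolynomial (Fin 2) ℝ) :
    pderiv 0 (lift2 p) = lift2 (pderiv 0 p) := by
  rw [lift2, ← cast0, pderiv_rename (Fin.castSucc_injective 2), lift2]

lemma pderiv1_lift2 (p : MvPolynomial (Fin 2) ℝ) :
    pderiv 1 (lift2 p) = lift2 (pderiv 1 p) := by
  rw [lift2, ← cast1, pderiv_rename (Fin.castSucc_injective 2), lift2]

lemma pderiv2_lift2 (p : MvPolynomial (Fin 2) ℝ) :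
    pderiv 2 (lift2 p) = 0 := by
  unfold lift2
  induction p using MvPolynomial.induction_on with
  | C a => simp
  | add p q hp hq => simp [hp, hq]
  | mul_X p i hp =>
    rw [map_mul, pderiv_mul, hp, rename_X, pderiv_X_of_ne, mul_zero, zero_mul, add_zero]
    fin_cases i <;> decide

lemma pderivS0 (n : ℕ) (g : ℕ → MvPolynomial (Fin 2) ℝ) :
    pderiv 0 (S n g) = S n fun i => pderiv 0 (g i) := by
  unfold S
  rw [map_sum]
  refine Finset.sum_congr rfl fun i _ => ?_
  rw [pderiv_mul, pderiv_pow, pderiv_X_of_ne (by decide), mul_zero, zero_mul, zero_add,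
    pderiv0_lift2]

lemma pderivS1 (n : ℕ) (g : ℕ → MvPolynomial (Fin 2) ℝ) :
    pderiv 1 (S n g) = S n fun i => pderiv 1 (g i) := by
  unfold S
  rw [map_sum]
  refine Finset.sum_congr rfl fun i _ => ?_
  rw [pderiv_mul, pderiv_pow, pderiv_X_of_ne (by decide), mul_zero, zero_mul, zero_add,
    pderiv1_lift2]

lemma X2_pderiv2_pow (k : ℕ) :
    (X 2 : MvPolynomial (Fin 3) ℝ) * pderiv 2 (X 2 ^ k) = (k : ℝ) • (X 2 ^ k) := by
  cases k with
  | zero => simp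
  | succ m =>
    rw [pderiv_pow, pderiv_X_self, mul_one, smul_eq_C_mul, ← C_eq_coe_nat]
    push_cast
    ring

lemma lift2_def (p : MvPolynomial (Fin 2) ℝ) : lift2 p = rename Fin.castSucc p := rfl

lemma eulerS (n c : ℕ) (g : ℕ → MvPolynomial (Fin 2) ℝ)
    (hg : ∀ i, (g i).IsHomogeneous (i - c)) (hz : ∀ i, i < c → g i = 0) :
    X 0 * pderiv 0 (S n g) + X 1 * pderiv 1 (S n g) + X 2 * pderiv 2 (S n g) =
      C ((n : ℝ) - c) * S n g := by
  rw [pderivS0, pderivS1]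
  unfold S
  rw [map_sum, Finset.mul_sum, Finset.mul_sum, Finset.mul_sum, Finset.mul_sum,
    ← Finset.sum_add_distrib, ← Finset.sum_add_distrib]
  refine Finset.sum_congr rfl fun i hi => ?_
  have hin : i ≤ n := by have := Finset.mem_range.mp hi; omega
  rcases lt_or_ge i c with hic | hci
  · simp [hz i hic, lift2_def]
  · have heuler := congrArg (rename (Fin.castSucc : Fin 2 → Fin 3)) (euler2 (hg i))
    rw [map_add, map_mul, map_mul, map_mul, rename_X, rename_X, cast0, cast1, rename_C,
      ← lift2_def, ← lift2_def, ← lift2_def] at heuler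
    have h2 : X 2 * pderiv 2 (X 2 ^ (n - i) * lift2 (g i)) =
        ((n - i : ℕ) : ℝ) • (X 2 ^ (n - i) * lift2 (g i)) := by
      rw [pderiv_mul, pderiv2_lift2, mul_zero, add_zero, ← mul_assoc, X2_pderiv2_pow,
        smul_mul_assoc]
    rw [h2, smul_eq_C_mul]
    have hcoef : ((n : ℝ) - c) = ((n - i : ℕ) : ℝ) + ((i - c : ℕ) : ℝ) := by
      rw [Nat.cast_sub hci, Nat.cast_sub hin]; ring
    rw [hcoef, map_add]
    linear_combination (X 2 ^ (n - i)) * heuler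

lemma eval_lift2 (p : MvPolynomial (Fin 2) ℝ) (u v w : ℝ) :
    eval ![u, v, w] (lift2 p) = ev p u v := by
  rw [lift2_def, eval_rename, ev]
  have h : (![u, v, w] ∘ Fin.castSucc) = ![u, v] := by
    funext i; fin_cases i <;> rfl
  rw [h]

lemma evalS_zero (n : ℕ) (g : ℕ → MvPolynomial (Fin 2) ℝ) (u v : ℝ) :
    eval ![u, v, 0] (S n g) = ev (g n) u v := by
  unfold S
  rw [map_sum, Finset.sum_eq_single n]
  · rw [map_mul, map_pow, eval_X]
    show (![u,v,0] 2) ^ (n - n) * _ = _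
    rw [Nat.sub_self, pow_zero, one_mul, eval_lift2]
  · intro i hi hne
    rw [map_mul, map_pow, eval_X]
    show (![u,v,0] 2) ^ (n - i) * _ = _
    have : n - i ≠ 0 := by have := Finset.mem_range.mp hi; omega
    show (0:ℝ) ^ (n - i) * _ = _
    rw [zero_pow this, zero_mul]
  · intro h
    exact absurd (Finset.self_mem_range_succ n) h

lemma evalS_pderiv2 (n : ℕ) (hn : 1 ≤ n) (g : ℕ → MvPolynomial (Fin 2) ℝ) (u v : ℝ) :
    eval ![u, v, 0] (pderiv 2 (S n g)) = ev (g (n - 1)) u v := by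
  unfold S
  rw [map_sum, map_sum]
  have hterm : ∀ i, eval ![u, v, (0:ℝ)] (pderiv 2 (X 2 ^ (n - i) * lift2 (g i))) =
      ((n - i : ℕ) : ℝ) * (0:ℝ) ^ (n - i - 1) * ev (g i) u v := by
    intro i
    rw [pderiv_mul, pderiv2_lift2, mul_zero, add_zero, pderiv_pow, pderiv_X_self, mul_one,
      map_mul, map_mul, map_pow, eval_X]
    show _ * (0:ℝ) ^ (n - i - 1) * _ = _
    rw [eval_lift2]
    norm_num
  rw [Finset.sum_eq_single (n - 1)]
  · rw [hterm]
    have h1 : n - (n - 1) = 1 := by omega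
    rw [h1]
    norm_num
  · intro i hi hne
    rw [hterm]
    have := Finset.mem_range.mp hi
    rcases Nat.eq_or_lt_of_le (Nat.le_of_lt_succ this) with rfl | hlt
    · rw [Nat.sub_self]; norm_num
    · have h2 : n - i - 1 ≠ 0 := by omega
      rw [zero_pow h2]; ring
  · intro h
    exact absurd (Finset.mem_range.mpr (by omega)) h

end OmegaAux


open OmegaAux in
/-- Let `F` be the homogenization of `f ∈ ℝ[x,y]` of degree `n ≥ 2`, and let `A, B, C`
be the coefficients of the projective extension of the form of principal curvatures:
`A = F_uv F_u² − F_uu F_u F_v + ω^{2(n−1)} F_uv`,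
`B = F_vv F_u² − F_uu F_v² + ω^{2(n−1)}(F_vv − F_uu)`,
`C = F_vv F_u F_v − F_uv F_v² − ω^{2(n−1)} F_uv`.
Then `ω` divides `u²A + uvB + v²C`, and the quotient restricted to `ω = 0` equals
`n·f_n·((f_{n−1})_u (f_n)_v − (f_{n−1})_v (f_n)_u)`. -/
theorem omega_divides_u2A_uvB_v2C (n : ℕ) (hn : 2 ≤ n)
    (f : MvPolynomial (Fin 2) ℝ) (hf : f.totalDegree = n)
    (F Fu Fv Fuu Fuv Fvv A B Cq : MvPolynomial (Fin 3) ℝ)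
    (hF : F = homog n f)
    (hFu : Fu = pderiv 0 F) (hFv : Fv = pderiv 1 F)
    (hFuu : Fuu = pderiv 0 Fu) (hFuv : Fuv = pderiv 1 Fu) (hFvv : Fvv = pderiv 1 Fv)
    (hA : A = Fuv * Fu ^ 2 - Fuu * Fu * Fv + X 2 ^ (2 * (n - 1)) * Fuv)
    (hB : B = Fvv * Fu ^ 2 - Fuu * Fv ^ 2 + X 2 ^ (2 * (n - 1)) * (Fvv - Fuu))
    (hC : Cq = Fvv * Fu * Fv - Fuv * Fv ^ 2 - X 2 ^ (2 * (n - 1)) * Fuv) :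
    ∃ Q : MvPolynomial (Fin 3) ℝ,
      X 0 ^ 2 * A + X 0 * X 1 * B + X 1 ^ 2 * Cq = X 2 * Q ∧
      ∀ u v : ℝ,
        eval ![u, v, 0] Q =
          (n : ℝ) * ev (homogeneousComponent n f) u v *
            (ev (pderiv 0 (homogeneousComponent (n - 1) f)) u v *
                ev (pderiv 1 (homogeneousComponent n f)) u v -
              ev (pderiv 1 (homogeneousComponent (n - 1) f)) u v *
                ev (pderiv 0 (homogeneousComponent n f)) u v) := by
  subst hA hB hC hFuu hFuv hFvv hFu hFv hF
  obtain ⟨k, rfl⟩ : ∃ k, n = k + 2 := ⟨n - 2, by omega⟩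
  -- abbreviations
  set m := k + 2 with hm
  have hS : homog m f = S m (fun i => homogeneousComponent i f) := rfl
  have hS0 : pderiv 0 (homog m f) =
      S m (fun i => pderiv 0 (homogeneousComponent i f)) := pderivS0 m _
  have hS1 : pderiv 1 (homog m f) =
      S m (fun i => pderiv 1 (homogeneousComponent i f)) := pderivS1 m _
  -- Euler relations
  have hR3 : X 0 * pderiv 0 (homog m f) + X 1 * pderiv 1 (homog m f) +
      X 2 * pderiv 2 (homog m f) = C ((m : ℝ)) * homog m f := by
    rw [hS]
    have := eulerS m 0 (fun i => homogeneousComponent i f)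
      (fun i => by simpa using homogeneousComponent_isHomogeneous i f)
      (fun i h => absurd h (Nat.not_lt_zero i))
    simpa using this
  have hR1 : X 0 * pderiv 0 (pderiv 0 (homog m f)) + X 1 * pderiv 1 (pderiv 0 (homog m f)) +
      X 2 * pderiv 2 (pderiv 0 (homog m f)) = C ((m : ℝ) - 1) * pderiv 0 (homog m f) := by
    rw [hS0]
    have := eulerS m 1 (fun i => pderiv 0 (homogeneousComponent i f))
      (fun i => hom_pderiv (homogeneousComponent_isHomogeneous i f) 0)
      (fun i h => by interval_cases i; simp)
    simpa using this
  have hR2 : X 0 * pderiv 0 (pderiv 1 (homog m f)) + X 1 * pderiv 1 (pderiv 1 (homog m f)) +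
      X 2 * pderiv 2 (pderiv 1 (homog m f)) = C ((m : ℝ) - 1) * pderiv 1 (homog m f) := by
    rw [hS1]
    have := eulerS m 1 (fun i => pderiv 1 (homogeneousComponent i f))
      (fun i => hom_pderiv (homogeneousComponent_isHomogeneous i f) 1)
      (fun i h => by interval_cases i; simp)
    simpa using this
  rw [pderiv_swap 0 1 (homog m f)] at hR2
  refine ⟨(C ((m : ℕ) : ℝ) * homog m f - X 2 * pderiv 2 (homog m f)) *
      (pderiv 1 (homog m f) * pderiv 2 (pderiv 0 (homog m f)) -
        pderiv 0 (homog m f) * pderiv 2 (pderiv 1 (homog m f))) +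
      X 2 ^ (2 * k + 1) *
        (X 0 ^ 2 * pderiv 1 (pderiv 0 (homog m f)) +
          X 0 * X 1 * (pderiv 1 (pderiv 1 (homog m f)) - pderiv 0 (pderiv 0 (homog m f))) -
          X 1 ^ 2 * pderiv 1 (pderiv 0 (homog m f))), ?_, ?_⟩
  · have he : 2 * (m - 1) = 2 * k + 1 + 1 := by omega
    rw [he]
    linear_combination
      (-(X 0 * pderiv 0 (homog m f) * pderiv 1 (homog m f) +
          X 1 * pderiv 1 (homog m f) ^ 2)) * hR1 +
      (X 0 * pderiv 0 (homog m f) ^ 2 +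
          X 1 * pderiv 0 (homog m f) * pderiv 1 (homog m f)) * hR2 +
      (X 2 * (pderiv 1 (homog m f) * pderiv 2 (pderiv 0 (homog m f)) -
          pderiv 0 (homog m f) * pderiv 2 (pderiv 1 (homog m f)))) * hR3
  · intro u v
    have eX : eval ![u, v, (0:ℝ)] (X 2 : MvPolynomial (Fin 3) ℝ) = 0 := by simp
    have e1 : eval ![u, v, (0:ℝ)] (homog m f) = ev (homogeneousComponent m f) u v := by
      rw [hS]; exact evalS_zero m _ u v
    have e2 : eval ![u, v, (0:ℝ)] (pderiv 0 (homog m f)) =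
        ev (pderiv 0 (homogeneousComponent m f)) u v := by
      rw [hS0]; exact evalS_zero m _ u v
    have e3 : eval ![u, v, (0:ℝ)] (pderiv 1 (homog m f)) =
        ev (pderiv 1 (homogeneousComponent m f)) u v := by
      rw [hS1]; exact evalS_zero m _ u v
    have e4 : eval ![u, v, (0:ℝ)] (pderiv 2 (pderiv 0 (homog m f))) =
        ev (pderiv 0 (homogeneousComponent (m - 1) f)) u v := by
      rw [hS0]; exact evalS_pderiv2 m (by omega) _ u v
    have e5 : eval ![u, v, (0:ℝ)] (pderiv 2 (pderiv 1 (homog m f))) =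
        ev (pderiv 1 (homogeneousComponent (m - 1) f)) u v := by
      rw [hS1]; exact evalS_pderiv2 m (by omega) _ u v
    simp only [map_add, map_mul, map_sub, map_pow, eval_C, eX, e1, e2, e3, e4, e5]
    rw [zero_pow (by omega : 2 * k + 1 ≠ 0)]
    ring
end
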